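/- For a two-component link \mathcal{L} = K_1 ⊔ K_2 and any positive integer p, \check{\mathcal{R}}_p(\mathcal{L}) = 2[p]^2 (\mathcal{Z}_{(p),(p)}(K_1 ⊔ K_2) + \mathcal{Z}_{(p),(p)}(K_1 ⊔ K_2^*)), where K_2^* denotes K_2 with reversed orientation; in particular \check{\mathcal{R}}_p(\mathcal{L}) lies in 2·ℤ[(q−q^{-1})^2, t^{±1}] whenever each \mathcal{Z}_{(p),(p)} lies in [p]^{-2}ℤ[(q−q^{-1})^2, t^{±1}]. -/

import Mathlib

open Finset

/-! Decorating every component with `R_{(p)} = P_p + P_p*` and expanding multilinearly gives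
a sum over all orientation patterns `S ⊆ {components}` of `⟨𝓛_S ⋆ (P_p ⊗ ⋯ ⊗ P_p)⟩`.
Reversing all orientations pairs `S` with its complement without changing the value, so the
sum is twice the sum over the patterns that keep the orientation of the first component; for
two components these are `K₁ ⊔ K₂` and `K₁ ⊔ K₂*`. -/

section OrientationExpansion

variable {ι C M : Type*} [DecidableEq ι] [AddCommMonoid C] [AddCommMonoid M]
  {B : Finset ι → (ι → C) → M} {P P' : C}

/-- `B S f` is the evaluation of the link with the components in `S` reversed and decorated by
`f`; `P'` is the orientation reversal of the pattern `P`. -/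
theorem eval_piecewise_add_eq_sum_powerset
    (hadd : ∀ S f i (x y : C),
      B S (Function.update f i (x + y)) = B S (Function.update f i x) + B S (Function.update f i y))
    (hstar : ∀ S f i, i ∉ S →
      B S (Function.update f i P') = B (insert i S) (Function.update f i P))
    (T : Finset ι) :
    ∀ (S : Finset ι) (f : ι → C), Disjoint S T →
      B S (T.piecewise (fun _ => P + P') f) =
        ∑ U ∈ T.powerset, B (S ∪ U) (T.piecewise (fun _ => P) f) := by
  induction T using Finset.induction_on with
  | empty => simp
  | insert a T haT ih =>
    intro S f hST
    obtain ⟨haS, hST⟩ := disjoint_insert_right.1 hST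
    rw [piecewise_insert, hadd, hstar _ _ _ haS, update_piecewise_of_notMem (hi := haT),
      ih S _ hST, ih (insert a S) _ (disjoint_insert_left.2 ⟨haT, hST⟩),
      sum_powerset_insert haT, piecewise_insert, update_piecewise_of_notMem (hi := haT)]
    congr 1
    refine sum_congr rfl fun U _ => ?_
    rw [union_insert, insert_union]

theorem eval_const_add_eq_sum [Fintype ι]
    (hadd : ∀ S f i (x y : C),
      B S (Function.update f i (x + y)) = B S (Function.update f i x) + B S (Function.update f i y))
    (hstar : ∀ S f i, i ∉ S →
      B S (Function.update f i P') = B (insert i S) (Function.update f i P)) :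
    B ∅ (fun _ => P + P') = ∑ U, B U (fun _ => P) := by
  simpa using
    eval_piecewise_add_eq_sum_powerset hadd hstar univ ∅ (fun _ => P) (disjoint_empty_left _)

end OrientationExpansion

theorem Finset.sum_eq_two_nsmul_sum_filter_notMem_of_compl {ι M : Type*} [Fintype ι]
    [DecidableEq ι] [AddCommMonoid M] {g : Finset ι → M} (hg : ∀ U, g Uᶜ = g U) (a : ι) :
    ∑ U, g U = 2 • ∑ U with a ∉ U, g U := by
  have hpair : ∑ U with a ∈ U, g U = ∑ U with a ∉ U, g U :=
    sum_nbij' compl compl (by simp) (by simp) (by simp) (by simp) (fun U _ => (hg U).symm)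
  rw [← sum_filter_add_sum_filter_not univ (a ∈ ·), hpair, two_nsmul]

theorem Finset.sum_fin_two_eq_two_mul {M : Type*} [NonAssocSemiring M] {g : Finset (Fin 2) → M}
    (hg : ∀ U, g Uᶜ = g U) :
    ∑ U, g U = 2 * (g ∅ + g {1}) := by
  have hfilter : (univ.filter fun U : Finset (Fin 2) => 0 ∉ U) = {∅, {1}} := by decide
  rw [sum_eq_two_nsmul_sum_filter_notMem_of_compl hg 0, hfilter, sum_pair (by decide),
    nsmul_eq_mul, Nat.cast_ofNat]

/-- The two-component case of the decomposition of the reformulated composite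
invariant, plus its integrality consequence. Setup, for a fixed two-component link
`𝓛 = K₁ ⊔ K₂`:
* `K` is the coefficient field (rational functions in `q, t`), with `q t : K`;
* `C` is the skein of the annulus, containing the power-sum pattern `Pp = P_p` and
  its orientation reversal `Pstar = P_p*`;
* `B S f = ⟨𝓛_S ⋆ (f 0 ⊗ f 1)⟩` is the framed HOMFLYPT evaluation of the link
  obtained by reversing the components in `S ⊆ {0,1}` and decorating with `f`; it is
  additive in each slot (`hadd`), decorating with `Pstar` equals reversing and
  decorating with `Pp` (`hstar`), and reversing *all* orientations preserves the
  HOMFLYPT polynomial (`hcompl`);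
* `𝓩_{(p),(p)}(𝓛_S) = B S (const Pp)`, and `𝓡̌_p(𝓛) = [p]² B ∅ (const (Pp+Pstar))`
  with `[p] = q^p - q^{-p}`.
Then `𝓡̌_p(𝓛) = 2[p]² (𝓩_{(p),(p)}(K₁ ⊔ K₂) + 𝓩_{(p),(p)}(K₁ ⊔ K₂*))`; and whenever
each `𝓩_{(p),(p)}` lies in `[p]^{-2} ℤ[(q-q^{-1})², t^{±1}]`, the invariant
`𝓡̌_p(𝓛)` lies in `2·ℤ[(q-q^{-1})², t^{±1}]`. -/
theorem reformulated_composite_two_components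
    (K : Type*) [Field K] (q t : K) (p : ℕ)
    (C : Type*) [AddCommMonoid C]
    (B : Finset (Fin 2) → (Fin 2 → C) → K)
    (Pp Pstar : C)
    (hadd : ∀ (S : Finset (Fin 2)) (f : Fin 2 → C) (α : Fin 2) (x y : C),
      B S (Function.update f α (x + y)) =
        B S (Function.update f α x) + B S (Function.update f α y))
    (hstar : ∀ (S : Finset (Fin 2)) (f : Fin 2 → C) (α : Fin 2), α ∉ S →
      B S (Function.update f α Pstar) = B (insert α S) (Function.update f α Pp))
    (hcompl : ∀ (S : Finset (Fin 2)) (f : Fin 2 → C), B Sᶜ f = B S f) :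
    (q ^ p - q⁻¹ ^ p) ^ 2 * B ∅ (fun _ => Pp + Pstar) =
      2 * ((q ^ p - q⁻¹ ^ p) ^ 2 * (B ∅ (fun _ => Pp) + B {1} (fun _ => Pp))) ∧
    ((∀ S : Finset (Fin 2), (q ^ p - q⁻¹ ^ p) ^ 2 * B S (fun _ => Pp) ∈
        Subring.closure {x : K | x = (q - q⁻¹) ^ 2 ∨ x = t ∨ x = t⁻¹}) →
      ∃ x ∈ Subring.closure {x : K | x = (q - q⁻¹) ^ 2 ∨ x = t ∨ x = t⁻¹},
        (q ^ p - q⁻¹ ^ p) ^ 2 * B ∅ (fun _ => Pp + Pstar) = 2 * x) := by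
  have hsum : B ∅ (fun _ => Pp + Pstar) = 2 * (B ∅ (fun _ => Pp) + B {1} (fun _ => Pp)) := by
    rw [eval_const_add_eq_sum hadd hstar, sum_fin_two_eq_two_mul fun U => hcompl U _]
  refine ⟨by linear_combination (q ^ p - q⁻¹ ^ p) ^ 2 * hsum, fun hint => ?_⟩
  exact ⟨_, Subring.add_mem _ (hint ∅) (hint {1}),
    by linear_combination (q ^ p - q⁻¹ ^ p) ^ 2 * hsum⟩
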